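/- For all nonnegative integers N and j with j ≤ N, the following identity holds in ℤ[q]: ∑_{π ∈ D_{≤N}, γ(π) = j} q^{E(π)} = [N choose j]_q, where the sum runs over the (finitely many) partitions into distinct parts all ≤ N whose alternating sum of parts equals j. Equivalently, the number of partitions π into distinct parts ≤ N with γ(π) = j and E(π) = n equals the number of partitions of n into at most j parts each of size at most N − j. -/

import Mathlib

/-! Deleting the largest part `N + 1` from `π = (N + 1, τ) ∈ D_{≤N+1}` gives `τ ∈ D_{≤N}` with
`γ(π) = N + 1 − γ(τ)` and `E(π) = O(τ) = E(τ) + γ(τ)`. So the generating functions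
`G(N, j) = ∑_{π ∈ D_{≤N}, γ(π) = j} q^{E(π)}` satisfy
`G(N + 1, j) = G(N, j) + q^{N+1−j} G(N, N + 1 − j)`. Since `[n, n − k] = [n, k]`, which
follows from `(q;q)_n = [n, k] (q;q)_k (q;q)_{n−k}`, the Gaussian binomials satisfy the same
recurrence `[N + 1, j] = [N, j] + q^{N+1−j} [N, N + 1 − j]`. -/

/-- Sum of `f` over the entries of a list at even 0-based positions, i.e. over the
odd-indexed parts `λ1, λ3, λ5, …` of a partition `(λ1, λ2, λ3, …)`. -/
def sumAlt (f : ℕ → ℕ) : List ℕ → ℕ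
  | [] => 0
  | [a] => f a
  | a :: _ :: l => f a + sumAlt f l

/-- `O(π) = λ1 + λ3 + λ5 + ⋯`, the sum of the odd-indexed parts. -/
def Osum (l : List ℕ) : ℕ := sumAlt id l

/-- `E(π) = λ2 + λ4 + λ6 + ⋯`, the sum of the even-indexed parts. -/
def Esum (l : List ℕ) : ℕ := sumAlt id l.tail

/-- `γ(π) = λ1 − λ2 + λ3 − λ4 + ⋯ = O(π) − E(π)`, the alternating sum of the parts.
For a weakly decreasing list we have `Osum l ≥ Esum l`, so natural subtraction is exact. -/
def gammaSum (l : List ℕ) : ℕ := Osum l - Esum l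

/-- `⌈O⌉(π) = ∑ ⌈λ_{2i−1}/2⌉`. -/
def ceilO (l : List ℕ) : ℕ := sumAlt (fun a => (a + 1) / 2) l

/-- `⌊O⌋(π) = ∑ ⌊λ_{2i−1}/2⌋`. -/
def floorO (l : List ℕ) : ℕ := sumAlt (fun a => a / 2) l

/-- `⌈E⌉(π) = ∑ ⌈λ_{2i}/2⌉`. -/
def ceilE (l : List ℕ) : ℕ := sumAlt (fun a => (a + 1) / 2) l.tail

/-- `⌊E⌋(π) = ∑ ⌊λ_{2i}/2⌋`. -/
def floorE (l : List ℕ) : ℕ := sumAlt (fun a => a / 2) l.tail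

/-- A partition: a weakly decreasing finite list of positive integers. -/
def IsPartition (l : List ℕ) : Prop := l.Pairwise (· ≥ ·) ∧ ∀ x ∈ l, 0 < x

/-- A partition into distinct parts: a strictly decreasing finite list of positive integers. -/
def IsDistinctPartition (l : List ℕ) : Prop := l.Pairwise (· > ·) ∧ ∀ x ∈ l, 0 < x

/-- The Gaussian binomial coefficient `[n choose k]_q` as a polynomial in `q`
(defined by the q-Pascal recurrence; it equals `(q;q)_n / ((q;q)_k (q;q)_{n−k})`). -/
noncomputable def qbinom : ℕ → ℕ → Polynomial ℤ
  | _, 0 => 1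
  | 0, _ + 1 => 0
  | n + 1, k + 1 => qbinom n k + Polynomial.X ^ (k + 1) * qbinom n (k + 1)

open Polynomial

section QBinom

lemma qbinom_zero_right (n : ℕ) : qbinom n 0 = 1 := by
  cases n <;> rfl

lemma qbinom_succ_succ (n k : ℕ) :
    qbinom (n + 1) (k + 1) = qbinom n k + X ^ (k + 1) * qbinom n (k + 1) := by
  rw [qbinom]

lemma qbinom_eq_zero_of_lt {n k : ℕ} (h : n < k) : qbinom n k = 0 := by
  induction n generalizing k with
  | zero => obtain ⟨k, rfl⟩ := Nat.exists_eq_succ_of_ne_zero h.ne'; rfl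
  | succ n ih =>
    obtain ⟨k, rfl⟩ := Nat.exists_eq_succ_of_ne_zero (Nat.ne_zero_of_lt h)
    rw [qbinom_succ_succ, ih (by omega), ih (by omega), mul_zero, add_zero]

lemma qbinom_self (n : ℕ) : qbinom n n = 1 := by
  induction n with
  | zero => rfl
  | succ n ih => rw [qbinom_succ_succ, ih, qbinom_eq_zero_of_lt n.lt_succ_self, mul_zero, add_zero]

/-- The q-factorial `(q;q)_n`. -/
noncomputable def qfact (n : ℕ) : ℤ[X] :=
  ∏ i ∈ Finset.range n, (1 - X ^ (i + 1))

lemma qfact_zero : qfact 0 = 1 := rfl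

lemma qfact_succ (n : ℕ) : qfact (n + 1) = qfact n * (1 - X ^ (n + 1)) :=
  Finset.prod_range_succ _ n

lemma qfact_ne_zero (n : ℕ) : qfact n ≠ 0 :=
  Finset.prod_ne_zero_iff.2 fun i _ => by
    rw [← neg_ne_zero, neg_sub, ← C_1]
    exact X_pow_sub_C_ne_zero i.succ_pos 1

lemma qbinom_mul_qfact_mul_qfact {n k : ℕ} (hk : k ≤ n) :
    qbinom n k * qfact k * qfact (n - k) = qfact n := by
  induction n generalizing k with
  | zero => obtain rfl := Nat.le_zero.1 hk; simp [qbinom_self, qfact_zero]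
  | succ n ih =>
    rcases k with _ | k
    · simp [qbinom_zero_right, qfact_zero]
    obtain rfl | hkn := eq_or_lt_of_le (Nat.le_of_succ_le_succ hk)
    · simp [qbinom_self, qfact_zero]
    obtain ⟨m, rfl⟩ := Nat.exists_eq_add_of_lt hkn
    have hk := ih (k := k) (by omega)
    have hk1 := ih (k := k + 1) (by omega)
    clear ih
    rw [show k + m + 1 - k = m + 1 by omega, qfact_succ m] at hk
    rw [show k + m + 1 - (k + 1) = m by omega, qfact_succ k] at hk1
    rw [show k + m + 1 + 1 - (k + 1) = m + 1 by omega, qbinom_succ_succ, qfact_succ k,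
      qfact_succ m, qfact_succ (k + m + 1)]
    linear_combination (1 - X ^ (k + 1)) * hk + X ^ (k + 1) * (1 - X ^ (m + 1)) * hk1

lemma qbinom_symm {n k : ℕ} (hk : k ≤ n) : qbinom n (n - k) = qbinom n k := by
  have h := qbinom_mul_qfact_mul_qfact (Nat.sub_le n k)
  rw [Nat.sub_sub_self hk, ← qbinom_mul_qfact_mul_qfact hk, mul_right_comm] at h
  exact mul_right_cancel₀ (qfact_ne_zero k) (mul_right_cancel₀ (qfact_ne_zero (n - k)) h)

lemma qbinom_succ_left_of_le {n k : ℕ} (hk : k ≤ n + 1) :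
    qbinom (n + 1) k = qbinom n k + X ^ (n + 1 - k) * qbinom n (n + 1 - k) := by
  obtain rfl | hlt := eq_or_lt_of_le hk
  · simp [qbinom_self, qbinom_zero_right, qbinom_eq_zero_of_lt n.lt_succ_self]
  have hkn : k ≤ n := Nat.le_of_lt_succ hlt
  calc qbinom (n + 1) k = qbinom (n + 1) (n - k + 1) := by
        rw [← qbinom_symm hk, Nat.sub_add_comm hkn]
    _ = qbinom n (n - k) + X ^ (n - k + 1) * qbinom n (n - k + 1) := qbinom_succ_succ _ _
    _ = qbinom n k + X ^ (n + 1 - k) * qbinom n (n + 1 - k) := by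
        rw [qbinom_symm hkn, Nat.sub_add_comm hkn]

end QBinom

section Partitions

lemma Esum_cons (a : ℕ) (t : List ℕ) : Esum (a :: t) = Osum t := rfl

lemma Osum_cons (a : ℕ) (t : List ℕ) : Osum (a :: t) = a + Esum t := by
  cases t <;> rfl

lemma Esum_le_Osum {l : List ℕ} (hl : l.Pairwise (· ≥ ·)) : Esum l ≤ Osum l := by
  induction l using sumAlt.induct with
  | case1 | case2 => simp [Esum, Osum, sumAlt]
  | case3 a b t ih =>
    simp only [List.pairwise_cons, List.mem_cons, forall_eq_or_imp] at hl
    simp only [Esum_cons, Osum_cons]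
    have := ih hl.2.2
    omega

lemma Osum_le_Esum_add {l : List ℕ} {M : ℕ} (hl : l.Pairwise (· ≥ ·)) (hM : ∀ x ∈ l, x ≤ M) :
    Osum l ≤ Esum l + M := by
  induction l using sumAlt.induct generalizing M with
  | case1 => simp [Esum, Osum, sumAlt]
  | case2 a => simpa [Esum, Osum, sumAlt] using hM
  | case3 a b t ih =>
    simp only [List.pairwise_cons, List.mem_cons, forall_eq_or_imp] at hl hM
    simp only [Esum_cons, Osum_cons]
    have := ih hl.2.2 hl.2.1
    omega

lemma gammaSum_le {l : List ℕ} {M : ℕ} (hl : l.Pairwise (· ≥ ·)) (hM : ∀ x ∈ l, x ≤ M) :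
    gammaSum l ≤ M := by
  have := Osum_le_Esum_add hl hM
  unfold gammaSum
  omega

lemma gammaSum_cons {a : ℕ} {t : List ℕ} (ht : t.Pairwise (· ≥ ·)) (ha : ∀ x ∈ t, x ≤ a) :
    gammaSum (a :: t) = a - gammaSum t := by
  have := Esum_le_Osum ht
  have := Osum_le_Esum_add ht ha
  unfold gammaSum
  rw [Esum_cons, Osum_cons]
  omega

lemma Esum_cons_eq_add_gammaSum (a : ℕ) {t : List ℕ} (ht : t.Pairwise (· ≥ ·)) :
    Esum (a :: t) = Esum t + gammaSum t := by
  have := Esum_le_Osum ht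
  unfold gammaSum
  rw [Esum_cons]
  omega

lemma IsDistinctPartition.pairwise_ge {l : List ℕ} (hl : IsDistinctPartition l) :
    l.Pairwise (· ≥ ·) :=
  hl.1.imp le_of_lt

lemma isDistinctPartition_cons {a : ℕ} {t : List ℕ} :
    IsDistinctPartition (a :: t) ↔ (∀ x ∈ t, x < a) ∧ 0 < a ∧ IsDistinctPartition t := by
  simp only [IsDistinctPartition, List.pairwise_cons, List.mem_cons, forall_eq_or_imp, gt_iff_lt]
  tauto

/-- `D_{≤N}`. -/
def distinctPartitionsLE (N : ℕ) : Set (List ℕ) :=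
  {l | IsDistinctPartition l ∧ ∀ x ∈ l, x ≤ N}

lemma distinctPartitionsLE_zero : distinctPartitionsLE 0 = {[]} := by
  ext (_ | ⟨a, t⟩)
  · simp [distinctPartitionsLE, IsDistinctPartition]
  · simp only [distinctPartitionsLE, Set.mem_ofPred_eq, isDistinctPartition_cons, List.mem_cons,
      forall_eq_or_imp, Set.mem_singleton_iff, reduceCtorEq, iff_false]
    omega

lemma distinctPartitionsLE_succ (N : ℕ) :
    distinctPartitionsLE (N + 1) =
      distinctPartitionsLE N ∪ List.cons (N + 1) '' distinctPartitionsLE N := by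
  ext l
  constructor
  · rintro ⟨hl, hle⟩
    by_cases hN : ∀ x ∈ l, x ≤ N
    · exact Or.inl ⟨hl, hN⟩
    push Not at hN
    obtain ⟨y, hy, hyN⟩ := hN
    obtain _ | ⟨a, t⟩ := l
    · simp at hy
    obtain ⟨hlt, -, ht⟩ := isDistinctPartition_cons.1 hl
    obtain rfl : a = N + 1 := by
      have := hle a List.mem_cons_self
      rcases List.mem_cons.1 hy with rfl | hyt
      · omega
      · have := hlt y hyt
        omega
    exact Or.inr ⟨t, ⟨ht, fun x hx => Nat.le_of_lt_succ (hlt x hx)⟩, rfl⟩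
  · rintro (⟨hl, hle⟩ | ⟨t, ⟨ht, hle⟩, rfl⟩)
    · exact ⟨hl, fun x hx => (hle x hx).trans N.le_succ⟩
    · refine ⟨isDistinctPartition_cons.2 ⟨fun x hx => Nat.lt_succ_of_le (hle x hx), N.succ_pos, ht⟩,
        ?_⟩
      simp only [List.mem_cons, forall_eq_or_imp]
      exact ⟨le_rfl, fun x hx => (hle x hx).trans N.le_succ⟩

lemma distinctPartitionsLE_finite (N : ℕ) : (distinctPartitionsLE N).Finite := by
  induction N with
  | zero => simp [distinctPartitionsLE_zero]
  | succ N ih => simpa [distinctPartitionsLE_succ] using ih.union (ih.image _)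

lemma disjoint_distinctPartitionsLE_image_cons (N : ℕ) :
    Disjoint (distinctPartitionsLE N) (List.cons (N + 1) '' distinctPartitionsLE N) := by
  rw [Set.disjoint_left]
  rintro _ ⟨-, hle⟩ ⟨t, -, rfl⟩
  have := hle (N + 1) List.mem_cons_self
  omega

lemma distinctPartitionsLE_inter_gammaSum_eq_empty {N j : ℕ} (h : N < j) :
    distinctPartitionsLE N ∩ gammaSum ⁻¹' {j} = ∅ := by
  refine Set.eq_empty_of_forall_notMem fun l ⟨hl, hγ⟩ => ?_
  have := gammaSum_le hl.1.pairwise_ge hl.2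
  simp only [Set.mem_preimage, Set.mem_singleton_iff] at hγ
  omega

lemma distinctPartitionsLE_succ_inter_gammaSum {N j : ℕ} (hj : j ≤ N + 1) :
    distinctPartitionsLE (N + 1) ∩ gammaSum ⁻¹' {j} =
      distinctPartitionsLE N ∩ gammaSum ⁻¹' {j} ∪
        List.cons (N + 1) '' (distinctPartitionsLE N ∩ gammaSum ⁻¹' {N + 1 - j}) := by
  rw [distinctPartitionsLE_succ, Set.union_inter_distrib_right, ← Set.image_inter_preimage]
  congr 2
  ext t
  simp only [Set.mem_inter_iff, Set.mem_preimage, Set.mem_singleton_iff, and_congr_right_iff]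
  intro ht
  have hle : ∀ x ∈ t, x ≤ N + 1 := fun x hx => (ht.2 x hx).trans N.le_succ
  have := gammaSum_le ht.1.pairwise_ge ht.2
  rw [gammaSum_cons ht.1.pairwise_ge hle]
  omega

end Partitions

lemma finsum_distinctPartitionsLE_gammaSum_eq_qbinom (N j : ℕ) :
    ∑ᶠ l ∈ distinctPartitionsLE N ∩ gammaSum ⁻¹' {j}, (X : ℤ[X]) ^ Esum l = qbinom N j := by
  induction N generalizing j with
  | zero =>
    rcases j with _ | j
    · simp [distinctPartitionsLE_zero, gammaSum, Osum, Esum, sumAlt, qbinom_zero_right]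
    · rw [distinctPartitionsLE_inter_gammaSum_eq_empty j.succ_pos, finsum_mem_empty,
        qbinom_eq_zero_of_lt j.succ_pos]
  | succ N ih =>
    rcases le_or_gt j (N + 1) with hj | hj
    · have hfin (i : ℕ) := (distinctPartitionsLE_finite N).inter_of_left (gammaSum ⁻¹' {i})
      have hEsum : ∀ t ∈ distinctPartitionsLE N ∩ gammaSum ⁻¹' {N + 1 - j},
          (X : ℤ[X]) ^ Esum ((N + 1) :: t) = X ^ (N + 1 - j) * X ^ Esum t := by
        rintro t ⟨ht, hγ⟩
        rw [Esum_cons_eq_add_gammaSum _ ht.1.pairwise_ge, hγ, pow_add, mul_comm]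
      have hdisj : Disjoint (distinctPartitionsLE N ∩ gammaSum ⁻¹' {j})
          (List.cons (N + 1) '' (distinctPartitionsLE N ∩ gammaSum ⁻¹' {N + 1 - j})) :=
        (disjoint_distinctPartitionsLE_image_cons N).mono Set.inter_subset_left
          (Set.image_mono Set.inter_subset_left)
      rw [distinctPartitionsLE_succ_inter_gammaSum hj,
        finsum_mem_union hdisj (hfin j) ((hfin _).image _),
        finsum_mem_image List.cons_injective.injOn, finsum_mem_congr rfl hEsum, ← mul_finsum_mem,
        ih, ih, qbinom_succ_left_of_le hj]
    · rw [distinctPartitionsLE_inter_gammaSum_eq_empty hj, finsum_mem_empty,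
        qbinom_eq_zero_of_lt hj]

theorem distinct_even_gaussian_general (N j : ℕ) :
    ∑ᶠ l ∈ {l : List ℕ | IsDistinctPartition l ∧ (∀ x ∈ l, x ≤ N) ∧ gammaSum l = j},
      (Polynomial.X : Polynomial ℤ) ^ Esum l
    = qbinom N j := by
  rw [← finsum_distinctPartitionsLE_gammaSum_eq_qbinom N j]
  congr! 3 with l
  exact and_assoc.symm

/-- In `ℤ[q]`: `∑_{π ∈ D_{≤N}, γ(π) = j} q^{E(π)} = [N choose j]_q`. -/
theorem distinct_even_gaussian (N j : ℕ) (hj : j ≤ N) :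
    ∑ᶠ l ∈ {l : List ℕ | IsDistinctPartition l ∧ (∀ x ∈ l, x ≤ N) ∧ gammaSum l = j},
      (Polynomial.X : Polynomial ℤ) ^ Esum l
    = qbinom N j :=
  distinct_even_gaussian_general N j
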